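/- arXiv:1709.09340 — 3 statements merged into one kernel-verified Lean document; each statement's English description precedes it below -/
import Mathlib

section
/- Let a network with all Dirichlet vertices at pressure zero be an interior critical point of the flow-uniformity functional Θ = Σ (1/2)κ_{kl}^2(p_k − p_l)^2 − Σ_{k∈V_N} μ_k(Σ_{l~k} κ_{kl}(p_k − p_l) − q_k), meaning κ_{kl} > 0 on all edges, ∂Θ/∂κ_{kl} = 0 on all edges, ∂Θ/∂p_k = 0 at all Neumann vertices, and μ_k = 0 at all Dirichlet vertices. Assume additionally p_k ≠ p_l for every edge (k,l). Then μ_k − μ_l = κ_{kl}(p_k − p_l) = Q_{kl} on every edge, and consequently the flows Q_{kl} of the critical network equal the flows of the network with all conductances set to 1 and the same boundary data. -/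
/-- At an interior critical point of the flow-uniformity
functional with `p_k ≠ p_l` on every edge, `μ_k - μ_l = κ_{kl}(p_k - p_l)`
on every edge, and the flows equal those of the unit-conductance network
with the same boundary data. -/
theorem interior_critical_flows_eq_uniform {V : Type*} [Fintype V] [DecidableEq V]
    (G : SimpleGraph V) [DecidableRel G.Adj] (hconn : G.Connected)
    (VD : Finset V) (hVD : VD.Nonempty)
    (κ : V → V → ℝ) (hsym : ∀ k l, κ k l = κ l k)
    (hpos : ∀ k l, G.Adj k l → 0 < κ k l)
    (p μ q : V → ℝ)
    (hpDir : ∀ k ∈ VD, p k = 0) (hμDir : ∀ k ∈ VD, μ k = 0)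
    (hKir : ∀ k ∉ VD, ∑ l, (if G.Adj k l then κ k l * (p k - p l) else 0) = q k)
    (hκcrit : ∀ k l, G.Adj k l →
      κ k l * (p k - p l) ^ 2 - (μ k - μ l) * (p k - p l) = 0)
    (hpcrit : ∀ k ∉ VD,
      (∑ l, (if G.Adj k l then κ k l ^ 2 * (p k - p l) else 0)) =
      (∑ l, (if G.Adj k l then κ k l * (μ k - μ l) else 0)))
    (hne : ∀ k l, G.Adj k l → p k ≠ p l) :
    (∀ k l, G.Adj k l → μ k - μ l = κ k l * (p k - p l)) ∧
    (∀ p' : V → ℝ, (∀ k ∈ VD, p' k = 0) →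
      (∀ k ∉ VD, ∑ l, (if G.Adj k l then (1 : ℝ) * (p' k - p' l) else 0) = q k) →
      ∀ k l, G.Adj k l → κ k l * (p k - p l) = p' k - p' l) := by
  have h1 : ∀ k l, G.Adj k l → μ k - μ l = κ k l * (p k - p l) := by
    intro k l h
    have hp : p k - p l ≠ 0 := sub_ne_zero.mpr (hne k l h)
    have hc := hκcrit k l h
    have hz : (κ k l * (p k - p l) - (μ k - μ l)) * (p k - p l) = 0 := by
      nlinarith [hc]
    rcases mul_eq_zero.mp hz with h' | h'
    · linarith
    · exact absurd h' hp
  refine ⟨h1, ?_⟩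
  intro p' hD hK k₀ l₀ hadj₀
  set f : V → ℝ := fun k => μ k - p' k with hf
  have hKμ : ∀ k ∉ VD, ∑ l, (if G.Adj k l then μ k - μ l else 0) = q k := by
    intro k hk
    rw [← hKir k hk]
    refine Finset.sum_congr rfl fun l _ => ?_
    by_cases h : G.Adj k l
    · simp [h, h1 k l h]
    · simp [h]
  have hKf : ∀ k ∉ VD, ∑ l, (if G.Adj k l then f k - f l else 0) = 0 := by
    intro k hk
    have ha := hK k hk
    simp only [one_mul] at ha
    have hb := hKμ k hk
    have hsplit : ∑ l, (if G.Adj k l then f k - f l else 0)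
        = (∑ l, (if G.Adj k l then μ k - μ l else 0))
          - ∑ l, (if G.Adj k l then p' k - p' l else 0) := by
      rw [← Finset.sum_sub_distrib]
      refine Finset.sum_congr rfl fun l _ => ?_
      by_cases h : G.Adj k l
      · simp only [h, if_true, hf]; ring
      · simp [h]
    rw [hsplit, ha, hb, sub_self]
  have hterm : ∀ k, f k * (∑ l, (if G.Adj k l then f k - f l else 0)) = 0 := by
    intro k
    by_cases hk : k ∈ VD
    · have : f k = 0 := by simp [hf, hμDir k hk, hD k hk]
      rw [this, zero_mul]
    · rw [hKf k hk, mul_zero]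
  have hS : ∑ k, ∑ l, (if G.Adj k l then (f k - f l) ^ 2 else 0) = 0 := by
    have expand : ∀ k l, (if G.Adj k l then (f k - f l) ^ 2 else 0)
        = (if G.Adj k l then f k * (f k - f l) else 0)
          - (if G.Adj k l then f l * (f k - f l) else 0) := by
      intro k l
      by_cases h : G.Adj k l
      · simp only [h, if_true]; ring
      · simp [h]
    have hswap : ∑ k, ∑ l, (if G.Adj k l then f l * (f k - f l) else 0)
        = - ∑ k, ∑ l, (if G.Adj k l then f k * (f k - f l) else 0) := by
      rw [Finset.sum_comm, ← Finset.sum_neg_distrib]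
      refine Finset.sum_congr rfl fun l _ => ?_
      rw [← Finset.sum_neg_distrib]
      refine Finset.sum_congr rfl fun k _ => ?_
      by_cases h : G.Adj k l
      · simp only [h, (G.adj_comm l k).mpr h, if_true]; ring
      · have h' : ¬ G.Adj l k := fun hh => h hh.symm
        simp [h, h']
    calc ∑ k, ∑ l, (if G.Adj k l then (f k - f l) ^ 2 else 0)
        = ∑ k, ((∑ l, (if G.Adj k l then f k * (f k - f l) else 0))
            - ∑ l, (if G.Adj k l then f l * (f k - f l) else 0)) := by
          refine Finset.sum_congr rfl fun k _ => ?_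
          rw [← Finset.sum_sub_distrib]
          exact Finset.sum_congr rfl fun l _ => expand k l
      _ = (∑ k, ∑ l, (if G.Adj k l then f k * (f k - f l) else 0))
            - ∑ k, ∑ l, (if G.Adj k l then f l * (f k - f l) else 0) := by
          rw [Finset.sum_sub_distrib]
      _ = 2 * ∑ k, ∑ l, (if G.Adj k l then f k * (f k - f l) else 0) := by
          rw [hswap]; ring
      _ = 2 * ∑ k, f k * (∑ l, (if G.Adj k l then f k - f l else 0)) := by
          congr 1
          refine Finset.sum_congr rfl fun k _ => ?_
          rw [Finset.mul_sum]
          refine Finset.sum_congr rfl fun l _ => ?_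
          by_cases h : G.Adj k l <;> simp [h]
      _ = 0 := by
          rw [Finset.sum_congr rfl fun k _ => hterm k]; simp
  have hzero : ∀ k l, G.Adj k l → f k - f l = 0 := by
    intro k l h
    have hnn : ∀ k ∈ Finset.univ (α := V),
        0 ≤ ∑ l, (if G.Adj k l then (f k - f l) ^ 2 else 0) := by
      intro k _
      refine Finset.sum_nonneg fun l _ => ?_
      by_cases h : G.Adj k l <;> simp [h, sq_nonneg]
    have h1' := (Finset.sum_eq_zero_iff_of_nonneg hnn).mp hS k (Finset.mem_univ k)
    have hnn2 : ∀ l ∈ Finset.univ (α := V),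
        (0:ℝ) ≤ (if G.Adj k l then (f k - f l) ^ 2 else 0) := by
      intro l _
      by_cases h : G.Adj k l <;> simp [h, sq_nonneg]
    have h2' := (Finset.sum_eq_zero_iff_of_nonneg hnn2).mp h1' l (Finset.mem_univ l)
    rw [if_pos h] at h2'
    exact pow_eq_zero_iff (by norm_num) |>.mp h2'
  have := hzero k₀ l₀ hadj₀
  have hμd := h1 k₀ l₀ hadj₀
  simp only [hf] at this
  linarith
end

section
/- In an interior critical point of the flow-uniformity functional (κ_{kl} > 0 on all edges, ∂Θ/∂p_k = 0 at interior vertices, μ = 0 on Dirichlet vertices, and κ_{kl}(p_k − p_l) = μ_k − μ_l whenever p_k ≠ p_l), if p_k = p_l for some edge (k,l), then necessarily μ_k = μ_l. Hence the relation μ_k − μ_l = κ_{kl}(p_k − p_l) holds on all edges. -/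
lemma myClimb {V : Type*} [Fintype V] [DecidableEq V]
    (G : SimpleGraph V) [DecidableRel G.Adj]
    (VD : Finset V)
    (κ : V → V → ℝ)
    (hpos : ∀ k l, G.Adj k l → 0 < κ k l)
    (p μ : V → ℝ)
    (hμDir : ∀ k ∈ VD, μ k = 0)
    (hpcrit : ∀ k ∉ VD,
      (∑ l, (if G.Adj k l then κ k l ^ 2 * (p k - p l) else 0)) =
      (∑ l, (if G.Adj k l then κ k l * (μ k - μ l) else 0)))
    (hcrit : ∀ k l, G.Adj k l → p k ≠ p l →
      κ k l * (p k - p l) = μ k - μ l) :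
    ∀ k ∉ VD, (∃ l, G.Adj k l ∧ p l = p k ∧ μ l < μ k) → μ k < 0 := by
  -- sum over equal-pressure neighbors vanishes
  have sumA : ∀ k ∉ VD,
      (∑ l, (if G.Adj k l ∧ p l = p k then κ k l * (μ k - μ l) else 0)) = 0 := by
    intro k hk
    have h := hpcrit k hk
    have key : ∀ l, (if G.Adj k l ∧ p l = p k then κ k l * (μ k - μ l) else 0)
        = (if G.Adj k l then κ k l * (μ k - μ l) else 0)
          - (if G.Adj k l then κ k l ^ 2 * (p k - p l) else 0) := by
      intro l
      by_cases ha : G.Adj k l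
      · by_cases hp : p l = p k
        · simp [ha, hp]
        · have hc := hcrit k l ha (fun h' => hp h'.symm)
          simp only [ha, hp, and_false, if_false, if_true, true_and]
          rw [pow_two, mul_assoc, hc]
          ring
      · simp [ha]
    rw [Finset.sum_congr rfl (fun l _ => key l), Finset.sum_sub_distrib, h, sub_self]
  -- step: if an equal-pressure neighbor is below, some equal-pressure neighbor is above
  have step : ∀ k ∉ VD, (∃ l, G.Adj k l ∧ p l = p k ∧ μ l < μ k) →
      ∃ m, G.Adj k m ∧ p m = p k ∧ μ k < μ m := by
    intro k hk ⟨l, hal, hpl, hμl⟩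
    by_contra hno
    push_neg at hno
    have hpossum : 0 < ∑ m, (if G.Adj k m ∧ p m = p k then κ k m * (μ k - μ m) else 0) := by
      apply Finset.sum_pos'
      · intro m _
        by_cases hm : G.Adj k m ∧ p m = p k
        · have := hno m hm.1 hm.2
          have := (hpos k m hm.1)
          simp only [hm, and_self, if_true]
          nlinarith
        · simp [hm]
      · refine ⟨l, Finset.mem_univ l, ?_⟩
        simp only [hal, hpl, and_self, if_true]
        have := hpos k l hal
        nlinarith
    rw [sumA k hk] at hpossum
    exact lt_irrefl 0 hpossum
  -- strong induction on the size of the strict upper set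
  have main : ∀ n : ℕ, ∀ k, (Finset.univ.filter fun v => μ k < μ v).card ≤ n →
      k ∉ VD → (∃ l, G.Adj k l ∧ p l = p k ∧ μ l < μ k) → μ k < 0 := by
    intro n
    induction n with
    | zero =>
      intro k hcard hk hex
      obtain ⟨m, _, _, hm⟩ := step k hk hex
      have : m ∈ Finset.univ.filter fun v => μ k < μ v := by
        simp [hm]
      have := Finset.card_pos.mpr ⟨m, this⟩
      omega
    | succ n ih =>
      intro k hcard hk hex
      obtain ⟨m, ham, hpm, hμm⟩ := step k hk hex
      by_cases hmVD : m ∈ VD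
      · have := hμDir m hmVD
        linarith
      · have hsub : (Finset.univ.filter fun v => μ m < μ v) ⊂
            (Finset.univ.filter fun v => μ k < μ v) := by
          constructor
          · intro v hv
            simp only [Finset.mem_filter, Finset.mem_univ, true_and] at hv ⊢
            linarith
          · intro hsub'
            have : m ∈ Finset.univ.filter fun v => μ k < μ v := by simp [hμm]
            have := hsub' this
            simp at this
        have hlt := Finset.card_lt_card hsub
        have : μ m < 0 := by
          apply ih m (by omega) hmVD
          exact ⟨k, ham.symm, hpm.symm, hμm⟩
        linarith
  intro k hk hex
  exact main _ k le_rfl hk hex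

/-- At an interior critical point of the flow-uniformity
functional, on any edge with `p_k = p_l` we necessarily have `μ_k = μ_l`;
hence `μ_k - μ_l = κ_{kl}(p_k - p_l)` holds on all edges. -/
theorem equal_pressure_implies_equal_mu {V : Type*} [Fintype V] [DecidableEq V]
    (G : SimpleGraph V) [DecidableRel G.Adj] (hconn : G.Connected)
    (VD : Finset V) (hVD : VD.Nonempty)
    (κ : V → V → ℝ) (hsym : ∀ k l, κ k l = κ l k)
    (hpos : ∀ k l, G.Adj k l → 0 < κ k l)
    (p μ : V → ℝ)
    (hpDir : ∀ k ∈ VD, p k = 0) (hμDir : ∀ k ∈ VD, μ k = 0)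
    (hpcrit : ∀ k ∉ VD,
      (∑ l, (if G.Adj k l then κ k l ^ 2 * (p k - p l) else 0)) =
      (∑ l, (if G.Adj k l then κ k l * (μ k - μ l) else 0)))
    (hcrit : ∀ k l, G.Adj k l → p k ≠ p l →
      κ k l * (p k - p l) = μ k - μ l) :
    (∀ k l, G.Adj k l → p k = p l → μ k = μ l) ∧
    (∀ k l, G.Adj k l → μ k - μ l = κ k l * (p k - p l)) := by
  have climb := myClimb G VD κ hpos p μ hμDir hpcrit hcrit
  -- negated instance
  have hμDir' : ∀ k ∈ VD, (fun v => -μ v) k = 0 := by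
    intro k hk; simp [hμDir k hk]
  have hpcrit' : ∀ k ∉ VD,
      (∑ l, (if G.Adj k l then κ k l ^ 2 * ((fun v => -p v) k - (fun v => -p v) l) else 0)) =
      (∑ l, (if G.Adj k l then κ k l * ((fun v => -μ v) k - (fun v => -μ v) l) else 0)) := by
    intro k hk
    have e1 : ∀ l, (if G.Adj k l then κ k l ^ 2 * (-p k - -p l) else 0)
        = -(if G.Adj k l then κ k l ^ 2 * (p k - p l) else 0) := by
      intro l; by_cases h : G.Adj k l <;> simp [h] <;> ring
    have e2 : ∀ l, (if G.Adj k l then κ k l * (-μ k - -μ l) else 0)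
        = -(if G.Adj k l then κ k l * (μ k - μ l) else 0) := by
      intro l; by_cases h : G.Adj k l <;> simp [h] <;> ring
    simp only []
    rw [Finset.sum_congr rfl fun l _ => e1 l, Finset.sum_congr rfl fun l _ => e2 l,
      Finset.sum_neg_distrib, Finset.sum_neg_distrib, hpcrit k hk]
  have hcrit' : ∀ k l, G.Adj k l → (fun v => -p v) k ≠ (fun v => -p v) l →
      κ k l * ((fun v => -p v) k - (fun v => -p v) l)
        = (fun v => -μ v) k - (fun v => -μ v) l := by
    intro k l ha hne
    have hne' : p k ≠ p l := fun h => hne (by simp [h])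
    have h := hcrit k l ha hne'
    simp only []
    linear_combination -h
  have climb' := myClimb G VD κ hpos (fun v => -p v) (fun v => -μ v) hμDir' hpcrit' hcrit'
  have hcase : ∀ k l, G.Adj k l → p k = p l → μ l < μ k → False := by
    intro k l ha hp hlt
    have hk0 : k ∉ VD → μ k < 0 := fun h => climb k h ⟨l, ha, hp.symm, hlt⟩
    have hl0 : l ∉ VD → 0 < μ l := by
      intro h
      have := climb' l h ⟨k, ha.symm, by simp [hp], by simpa using hlt⟩
      linarith
    by_cases hkVD : k ∈ VD <;> by_cases hlVD : l ∈ VD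
    · have := hμDir k hkVD; have := hμDir l hlVD; linarith
    · have := hμDir k hkVD; have := hl0 hlVD; linarith
    · have := hμDir l hlVD; have := hk0 hkVD; linarith
    · have := hk0 hkVD; have := hl0 hlVD; linarith
  have first : ∀ k l, G.Adj k l → p k = p l → μ k = μ l := by
    intro k l ha hp
    rcases lt_trichotomy (μ k) (μ l) with h | h | h
    · exact absurd (hcase l k ha.symm hp.symm h) (fun x => x)
    · exact h
    · exact absurd (hcase k l ha hp h) (fun x => x)
  refine ⟨first, ?_⟩
  intro k l ha
  by_cases hp : p k = p l
  · rw [hp, first k l ha hp]; simp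
  · exact (hcrit k l ha hp).symm
end

section
/- With μ = 2p as above, the stationarity condition ∂Θ/∂κ_{kl} = 0 for the dissipation functional with material constraint reduces to λγκ_{kl}^{γ−1} = (p_k − p_l)^2 on every edge with κ_{kl} > 0. Consequently, for γ < 1, in a critical network all edges carrying flow satisfy κ_{kl}^{1−γ}(p_k − p_l)^2 = λγ, i.e. Q_{kl}^2 = λγ κ_{kl}^{1+γ}; in particular the flow magnitude on each edge is proportional to κ_{kl}^{(1+γ)/2}. -/
/-- With `μ = 2p`, stationarity in the conductances for the
dissipation functional with material constraint gives
`λγκ^{γ-1} = (p_k - p_l)²` on every edge, hence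
`Q_{kl}² = λγ κ^{1+γ}` and `|Q_{kl}| = √(λγ) · κ^{(1+γ)/2}`
(Murray's law for `κ ∝ r⁴`, `γ = 1/2`). -/
theorem murray_law_from_stationarity {V : Type*} [Fintype V] [DecidableEq V]
    (G : SimpleGraph V) [DecidableRel G.Adj]
    (κ : V → V → ℝ) (hpos : ∀ k l, G.Adj k l → 0 < κ k l)
    (p μ : V → ℝ) (lam γ : ℝ) (hγ0 : 0 < γ) (hγ1 : γ < 1)
    (hμ : ∀ k, μ k = 2 * p k)
    (hstat : ∀ k l, G.Adj k l →
      (p k - p l) ^ 2 + lam * γ * κ k l ^ (γ - 1) -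
        (μ k - μ l) * (p k - p l) = 0) :
    ∀ k l, G.Adj k l →
      lam * γ * κ k l ^ (γ - 1) = (p k - p l) ^ 2 ∧
      (κ k l * (p k - p l)) ^ 2 = lam * γ * κ k l ^ (1 + γ) ∧
      |κ k l * (p k - p l)| = Real.sqrt (lam * γ) * κ k l ^ ((1 + γ) / 2) := by
  intro k l hkl
  have hκ := hpos k l hkl
  have h := hstat k l hkl
  rw [hμ k, hμ l] at h
  have h1 : lam * γ * κ k l ^ (γ - 1) = (p k - p l) ^ 2 := by nlinarith [h]
  refine ⟨h1, ?_, ?_⟩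
  · have hκpow : κ k l ^ (1 + γ) = κ k l * κ k l * κ k l ^ (γ - 1) := by
      rw [show (1:ℝ) + γ = 1 + 1 + (γ - 1) by ring, Real.rpow_add hκ,
        Real.rpow_add hκ, Real.rpow_one]
    rw [hκpow]; linear_combination (-(κ k l * κ k l)) * h1
  · have h2 : (κ k l * (p k - p l)) ^ 2 = lam * γ * κ k l ^ (1 + γ) := by
      have hκpow : κ k l ^ (1 + γ) = κ k l * κ k l * κ k l ^ (γ - 1) := by
        rw [show (1:ℝ) + γ = 1 + 1 + (γ - 1) by ring, Real.rpow_add hκ,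
          Real.rpow_add hκ, Real.rpow_one]
      rw [hκpow]; linear_combination (-(κ k l * κ k l)) * h1
    have hlg : 0 ≤ lam * γ := by
      have hp : 0 < κ k l ^ (γ - 1) := Real.rpow_pos_of_pos hκ _
      nlinarith [sq_nonneg (p k - p l), h1]
    calc |κ k l * (p k - p l)| = Real.sqrt ((κ k l * (p k - p l)) ^ 2) := by
            rw [Real.sqrt_sq_eq_abs]
      _ = Real.sqrt (lam * γ * κ k l ^ (1 + γ)) := by rw [h2]
      _ = Real.sqrt (lam * γ) * Real.sqrt (κ k l ^ (1 + γ)) := Real.sqrt_mul hlg _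
      _ = Real.sqrt (lam * γ) * κ k l ^ ((1 + γ) / 2) := by
            rw [Real.sqrt_eq_rpow (κ k l ^ (1 + γ)), ← Real.rpow_mul hκ.le]
            congr 1; ring
end
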